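/- For every positive integer k, the solution lambda_k of the equation (1/k) E[min(Poisson(lambda),k)] = P[Poisson(lambda) <= k-1] yields a common value phi_k = P[Poisson(lambda_k) <= k-1] satisfying phi_k >= 1/2. -/

import Mathlib

/-!
Since `min X k ≥ k · 1[X ≥ k]`, we have `μ_k ≥ P[X ≥ k] = 1 - δ_k` for every rate.
At the balanced rate `μ_k = δ_k`, so `δ_k ≥ 1 - δ_k`.
-/

/-- The probability mass function of a Poisson random variable with rate `l`. -/
noncomputable def poissonPMF (l : ℝ) (j : ℕ) : ℝ := Real.exp (-l) * l ^ j / (Nat.factorial j)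

/-- `mu_k(X) = E[min(X,k)]/k` for `X ~ Poisson(l)`. -/
noncomputable def muPoisson (k : ℕ) (l : ℝ) : ℝ :=
  (1 / k) * ∑' j : ℕ, (↑(min j k) : ℝ) * poissonPMF l j

/-- `delta_k(X) = P[X ≤ k-1]` for `X ~ Poisson(l)`. -/
noncomputable def deltaPoisson (k : ℕ) (l : ℝ) : ℝ := ∑ j ∈ Finset.range k, poissonPMF l j

open Finset

lemma poissonPMF_nonneg {l : ℝ} (hl : 0 ≤ l) (j : ℕ) : 0 ≤ poissonPMF l j := by
  unfold poissonPMF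
  positivity

lemma hasSum_poissonPMF (l : ℝ) : HasSum (poissonPMF l) 1 := by
  have h := (NormedSpace.expSeries_div_hasSum_exp l).mul_left (Real.exp (-l))
  rw [← congrFun Real.exp_eq_exp_ℝ, ← Real.exp_add, neg_add_cancel, Real.exp_zero] at h
  simp only [← mul_div_assoc] at h
  exact h

lemma mul_tsum_nat_add_le_tsum_min_mul {p : ℕ → ℝ} (hp0 : ∀ j, 0 ≤ p j) (hp : Summable p)
    (k : ℕ) : k * ∑' j, p (j + k) ≤ ∑' j, (min j k : ℕ) * p j := by
  set f : ℕ → ℝ := fun j ↦ (min j k : ℕ) * p j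
  have hf : Summable f :=
    (hp.mul_left (k : ℝ)).of_nonneg_of_le (fun j ↦ mul_nonneg (Nat.cast_nonneg _) (hp0 j))
      (fun j ↦ mul_le_mul_of_nonneg_right (Nat.cast_le.mpr (min_le_right j k)) (hp0 j))
  calc (k : ℝ) * ∑' j, p (j + k)
      = ∑' j, f (j + k) := by simp [f, ← tsum_mul_left]
    _ ≤ ∑ j ∈ range k, f j + ∑' j, f (j + k) :=
        le_add_of_nonneg_left (sum_nonneg fun j _ ↦ mul_nonneg (Nat.cast_nonneg _) (hp0 j))
    _ = ∑' j, f j := hf.sum_add_tsum_nat_add k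

lemma one_sub_deltaPoisson_le_muPoisson {k : ℕ} (hk : 0 < k) {l : ℝ} (hl : 0 ≤ l) :
    1 - deltaPoisson k l ≤ muPoisson k l := by
  have hsum := hasSum_poissonPMF l
  have htail : ∑' j, poissonPMF l (j + k) = 1 - deltaPoisson k l := by
    rw [← hsum.tsum_eq, ← hsum.summable.sum_add_tsum_nat_add k, deltaPoisson]
    ring
  have hkpos : (0 : ℝ) < k := by exact_mod_cast hk
  rw [muPoisson, ← htail, one_div, le_inv_mul_iff₀ hkpos]
  exact mul_tsum_nat_add_le_tsum_min_mul (poissonPMF_nonneg hl) hsum.summable k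

/-- For every positive integer `k`, the solution `λ_k > 0` of the balance equation
`(1/k) E[min(Poisson(λ),k)] = P[Poisson(λ) ≤ k-1]` yields a common value
`φ_k = P[Poisson(λ_k) ≤ k-1]` that is at least `1/2`. -/
theorem stmt_19 (k : ℕ) (hk : 0 < k) (l : ℝ) (hl : 0 < l)
    (hbal : muPoisson k l = deltaPoisson k l) :
    1 / 2 ≤ deltaPoisson k l := by
  have := one_sub_deltaPoisson_le_muPoisson hk hl.le
  linarith
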